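/- Let G = N ⋊ H be a semidirect product of groups, and identify N and H with subgroups of G. Let K₃ be the subgroup of ∇(G) generated by the elements (g ⊗ n)(n ⊗ g) and n₁ ⊗ n₁ for g ∈ G and n, n₁ ∈ N. Then ∇(G) ≅ K₃ × ∇(H), via the exact sequence 1 → K₃ → ∇(G) → ∇(H) → 1 induced by the projection p : G → H, which splits via the map induced by the inclusion H → G. -/

import Mathlib

/- Nonabelian tensor square framework (Brown–Loday). -/

namespace NATensor

variable (G : Type*) [Group G]

/-- The relator set for the nonabelian tensor square of `G`:
`g g' ⊗ h = (ᵍg' ⊗ ᵍh)(g ⊗ h)` and `g ⊗ h h' = (g ⊗ h)(ʰg ⊗ ʰh')`. -/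
def rels : Set (FreeGroup (G × G)) :=
  {r | (∃ g g' h : G,
          r = FreeGroup.of (g * g', h) *
              (FreeGroup.of (g * g' * g⁻¹, g * h * g⁻¹) * FreeGroup.of (g, h))⁻¹) ∨
       (∃ g h h' : G,
          r = FreeGroup.of (g, h * h') *
              (FreeGroup.of (g, h) * FreeGroup.of (h * g * h⁻¹, h * h' * h⁻¹))⁻¹)}

/-- The nonabelian tensor square `G ⊗ G`. -/
abbrev TS := PresentedGroup (rels G)

variable {G}

/-- The generator `g ⊗ h` of the nonabelian tensor square. -/
def tmul (g h : G) : TS G := PresentedGroup.of (g, h)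

lemma mk_rel_eq_one {r : FreeGroup (G × G)} (hr : r ∈ rels G) :
    (PresentedGroup.mk (rels G) r : TS G) = 1 :=
  (QuotientGroup.eq_one_iff r).mpr (Subgroup.subset_normalClosure hr)

lemma tmul_rel₁ (g g' h : G) :
    tmul (g * g') h = tmul (g * g' * g⁻¹) (g * h * g⁻¹) * tmul g h := by
  have h1 := mk_rel_eq_one (G := G) (Or.inl ⟨g, g', h, rfl⟩)
  simp only [map_mul, map_inv, mul_inv_eq_one] at h1
  exact h1

lemma tmul_rel₂ (g h h' : G) :
    tmul g (h * h') = tmul g h * tmul (h * g * h⁻¹) (h * h' * h⁻¹) := by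
  have h1 := mk_rel_eq_one (G := G) (Or.inr ⟨g, h, h', rfl⟩)
  simp only [map_mul, map_inv, mul_inv_eq_one] at h1
  exact h1

variable (G)

/-- The homomorphism `κ : G ⊗ G → G`, `g ⊗ h ↦ [g,h] = g h g⁻¹ h⁻¹` (its image is `[G,G]`). -/
def kappa : TS G →* G :=
  PresentedGroup.toGroup (f := fun x : G × G => x.1 * x.2 * x.1⁻¹ * x.2⁻¹) (by
    rintro r (⟨g, g', h, rfl⟩ | ⟨g, h, h', rfl⟩) <;>
      simp only [map_mul, map_inv, FreeGroup.lift_apply_of] <;> group)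

variable {G}

@[simp] lemma kappa_tmul (g h : G) : kappa G (tmul g h) = g * h * g⁻¹ * h⁻¹ :=
  PresentedGroup.toGroup.of _

variable (G)

/-- `J(G) = ker κ ≅ π₃(SK(G,1))`. -/
def J : Subgroup (TS G) := (kappa G).ker

/-- `∇(G)`: the (normal) subgroup of `G ⊗ G` generated by the elements `x ⊗ x`. -/
def nabla : Subgroup (TS G) :=
  Subgroup.normalClosure {t | ∃ x : G, t = tmul x x}

/-- `Δ(G)`: the (normal) subgroup of `G ⊗ G` generated by the `(x ⊗ y)(y ⊗ x)`. -/
def delta : Subgroup (TS G) :=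
  Subgroup.normalClosure {t | ∃ x y : G, t = tmul x y * tmul y x}

instance : (nabla G).Normal := Subgroup.normalClosure_normal

instance : (delta G).Normal := Subgroup.normalClosure_normal

/-- The exterior square `G ∧ G = (G ⊗ G)/∇(G)`. -/
abbrev ES := TS G ⧸ nabla G

/-- The symmetric square `G ⊗̃ G = (G ⊗ G)/Δ(G)`. -/
abbrev SS := TS G ⧸ delta G

variable {G}

/-- The element `g ∧ h` of the exterior square. -/
def emul (g h : G) : ES G := QuotientGroup.mk' (nabla G) (tmul g h)

/-- The image of `g ⊗ h` in the symmetric square. -/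
def smul (g h : G) : SS G := QuotientGroup.mk' (delta G) (tmul g h)

variable {H : Type*} [Group H]

/-- The induced homomorphism `G ⊗ G → H ⊗ H` of a homomorphism `f : G → H`. -/
def tmap (f : G →* H) : TS G →* TS H :=
  PresentedGroup.toGroup (f := fun x : G × G => tmul (f x.1) (f x.2)) (by
    rintro r (⟨g, g', h, rfl⟩ | ⟨g, h, h', rfl⟩) <;>
      simp only [map_mul, map_inv, FreeGroup.lift_apply_of, mul_inv_eq_one]
    · rw [tmul_rel₁]
    · rw [tmul_rel₂])

@[simp] lemma tmap_tmul (f : G →* H) (g h : G) :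
    tmap f (tmul g h) = tmul (f g) (f h) :=
  PresentedGroup.toGroup.of _

lemma nabla_le_comap_nabla (f : G →* H) :
    nabla G ≤ MonoidHom.ker ((QuotientGroup.mk' (nabla H)).comp (tmap f)) := by
  refine Subgroup.normalClosure_le_normal ?_
  rintro _ ⟨y, rfl⟩
  simp only [SetLike.mem_coe, MonoidHom.mem_ker, MonoidHom.comp_apply, tmap_tmul,
    QuotientGroup.mk'_apply, QuotientGroup.eq_one_iff]
  exact Subgroup.subset_normalClosure ⟨f y, rfl⟩

lemma delta_le_comap_delta (f : G →* H) :
    delta G ≤ MonoidHom.ker ((QuotientGroup.mk' (delta H)).comp (tmap f)) := by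
  refine Subgroup.normalClosure_le_normal ?_
  rintro _ ⟨x, y, rfl⟩
  simp only [SetLike.mem_coe, MonoidHom.mem_ker, MonoidHom.comp_apply, map_mul, tmap_tmul,
    QuotientGroup.mk'_apply, ← QuotientGroup.mk_mul, QuotientGroup.eq_one_iff]
  exact Subgroup.subset_normalClosure ⟨f x, f y, rfl⟩

/-- The induced homomorphism `G ∧ G → H ∧ H` of a homomorphism `f : G → H`. -/
def emap (f : G →* H) : ES G →* ES H :=
  QuotientGroup.lift (nabla G) ((QuotientGroup.mk' (nabla H)).comp (tmap f))
    (fun x hx => MonoidHom.mem_ker.mp (nabla_le_comap_nabla f hx))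

@[simp] lemma emap_emul (f : G →* H) (g h : G) :
    emap f (emul g h) = emul (f g) (f h) := by
  simp [emap, emul, QuotientGroup.mk'_apply, QuotientGroup.lift_mk']
  exact congrArg (QuotientGroup.mk' (nabla H)) (tmap_tmul f g h)

/-- The induced homomorphism `G ⊗̃ G → H ⊗̃ H` of a homomorphism `f : G → H`. -/
def smap (f : G →* H) : SS G →* SS H :=
  QuotientGroup.lift (delta G) ((QuotientGroup.mk' (delta H)).comp (tmap f))
    (fun x hx => MonoidHom.mem_ker.mp (delta_le_comap_delta f hx))

variable (G)

lemma nabla_le_ker_kappa : nabla G ≤ (kappa G).ker := by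
  refine Subgroup.normalClosure_le_normal ?_
  rintro _ ⟨x, rfl⟩
  simp only [SetLike.mem_coe, MonoidHom.mem_ker, kappa_tmul]
  group

/-- The homomorphism `κ' : G ∧ G → G`, `g ∧ h ↦ [g,h]` (its image is `[G,G]`). -/
def kappa' : ES G →* G :=
  QuotientGroup.lift (nabla G) (kappa G)
    (fun x hx => MonoidHom.mem_ker.mp (nabla_le_ker_kappa G hx))

/-- The Schur multiplier `M(G) = ker κ' ≅ H₂(G)`. -/
def M : Subgroup (ES G) := (kappa' G).ker

/-- `J̃(G) = J(G)/Δ(G) ≅ π₂ˢ(K(G,1))`, realized as the image of `J(G)` in `G ⊗̃ G`. -/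
def Jt : Subgroup (SS G) := Subgroup.map (QuotientGroup.mk' (delta G)) (J G)

/-- `∇(G)/Δ(G)`, realized as the image of `∇(G)` in `G ⊗̃ G`. -/
def nablaBar : Subgroup (SS G) := Subgroup.map (QuotientGroup.mk' (delta G)) (nabla G)

end NATensor

open NATensor

/-- `K₃`: the subgroup of `∇(G)` (for `G = N ⋊ H`) generated by the elements
`(g ⊗ n)(n ⊗ g)` and `n₁ ⊗ n₁` with `g ∈ G`, `n, n₁ ∈ N`. -/
def K₃ (N H : Type*) [Group N] [Group H] (φ : H →* MulAut N) : Subgroup (TS (N ⋊[φ] H)) :=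
  Subgroup.closure
    {t | (∃ (g : N ⋊[φ] H) (n : N),
            t = tmul g (SemidirectProduct.inl n) * tmul (SemidirectProduct.inl n) g) ∨
         (∃ n₁ : N, t = tmul (SemidirectProduct.inl n₁) (SemidirectProduct.inl n₁))}


/-!
Conjugation by `g ⊗ h` acts on `G ⊗ G` through the commutator `[g, h]`, so every `x ⊗ x` is central
and `∇(G)` is a central subgroup. Hence the retraction `∇(p) : ∇(G) → ∇(H)`, with section `∇(i)`,
splits `∇(G)` as `ker ∇(p) × ∇(H)`. The kernel is `K₃`: writing `x = n h` with `n ∈ N`, `h ∈ H`,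
the identity `nh ⊗ nh = (n ⊗ h)(h ⊗ n)(ʰn ⊗ ʰn)(h ⊗ h)` gives `∇(G) = K₃ · i(∇(H))`, while `p`
kills `K₃` and is injective on `i(∇(H))`.
-/

namespace NATensor

section TensorSquare

variable {G : Type*} [Group G]

lemma tmul_one (g : G) : tmul g (1 : G) = 1 := by
  simpa using tmul_rel₂ g 1 1

lemma one_tmul (h : G) : tmul (1 : G) h = 1 := by
  simpa using tmul_rel₁ 1 1 h

/-- Both sides arise from expanding `g x ⊗ h y` by the two defining relations, in either order. -/
lemma semiconjBy_tmul (g h x y : G) :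
    SemiconjBy (tmul g h) (tmul (h * g * x * (h * g)⁻¹) (h * g * y * (h * g)⁻¹))
      (tmul (g * h * x * (g * h)⁻¹) (g * h * y * (g * h)⁻¹)) := by
  have e1 := tmul_rel₁ g x (h * y)
  have e2 := tmul_rel₂ g h y
  have e3 := tmul_rel₂ (g * x) h y
  have e4 := tmul_rel₁ g x h
  have e5 := tmul_rel₂ (g * x * g⁻¹) (g * h * g⁻¹) (g * y * g⁻¹)
  have e6 := tmul_rel₁ (h * g * h⁻¹) (h * x * h⁻¹) (h * y * h⁻¹)
  rw [show g * (h * y) * g⁻¹ = (g * h * g⁻¹) * (g * y * g⁻¹) by group] at e1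
  rw [show (g * h * g⁻¹) * (g * x * g⁻¹) * (g * h * g⁻¹)⁻¹ = g * h * x * (g * h)⁻¹ by group,
    show (g * h * g⁻¹) * (g * y * g⁻¹) * (g * h * g⁻¹)⁻¹ = g * h * y * (g * h)⁻¹ by group] at e5
  rw [show h * (g * x) * h⁻¹ = (h * g * h⁻¹) * (h * x * h⁻¹) by group] at e3
  rw [show (h * g * h⁻¹) * (h * x * h⁻¹) * (h * g * h⁻¹)⁻¹ = h * g * x * (h * g)⁻¹ by group,
    show (h * g * h⁻¹) * (h * y * h⁻¹) * (h * g * h⁻¹)⁻¹ = h * g * y * (h * g)⁻¹ by group] at e6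
  rw [e5, e2] at e1
  rw [e4, e6] at e3
  have key := e3.symm.trans e1
  simp only [mul_assoc, mul_right_inj] at key
  simp only [← mul_assoc, mul_left_inj] at key
  exact key

lemma commute_tmul_self (x g h : G) : Commute (tmul x x) (tmul g h) := by
  have key := semiconjBy_tmul x x ((x * x)⁻¹ * g * (x * x)) ((x * x)⁻¹ * h * (x * x))
  rwa [show x * x * ((x * x)⁻¹ * g * (x * x)) * (x * x)⁻¹ = g by group,
    show x * x * ((x * x)⁻¹ * h * (x * x)) * (x * x)⁻¹ = h by group] at key

lemma tmul_self_mem_center (x : G) : tmul x x ∈ Subgroup.center (TS G) := by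
  refine Subgroup.mem_center_iff.2 fun t => ?_
  have ht : t ∈ Subgroup.centralizer {tmul x x} :=
    PresentedGroup.generated_by _ _ (fun ⟨g, h⟩ => Subgroup.mem_centralizer_singleton_iff.2
      (commute_tmul_self x g h).symm.eq) t
  exact Subgroup.mem_centralizer_singleton_iff.1 ht

lemma nabla_le_center : nabla G ≤ Subgroup.center (TS G) :=
  Subgroup.normalClosure_le_normal (by rintro _ ⟨x, rfl⟩; exact tmul_self_mem_center x)

lemma tmul_mul_self (n g : G) :
    tmul (n * g) (n * g) = tmul n g * tmul g n * tmul (g * n * g⁻¹) (g * n * g⁻¹) * tmul g g := by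
  have e1 : tmul (n * g) (n * g) = tmul n (g * n) * tmul g (n * g) := by
    simpa [mul_assoc] using tmul_rel₁ g (g⁻¹ * n * g) (n * g)
  have e2 : tmul n (g * n) = tmul n g * tmul (g * n * g⁻¹) (g * n * g⁻¹) := by
    simpa [mul_assoc] using tmul_rel₂ n g n
  have e3 : tmul g (n * g) = tmul g g * tmul g n := by
    simpa [mul_assoc] using tmul_rel₂ g g (g⁻¹ * n * g)
  rw [e1, e2, e3, (commute_tmul_self g g n).eq]
  simp only [mul_assoc]
  rw [← mul_assoc _ (tmul g n), (commute_tmul_self _ g n).eq, mul_assoc]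

lemma tmul_self_mem_nabla (x : G) : tmul x x ∈ nabla G :=
  Subgroup.subset_normalClosure ⟨x, rfl⟩

lemma tmul_mul_tmul_swap_mem_nabla (n g : G) : tmul n g * tmul g n ∈ nabla G := by
  have key : tmul n g * tmul g n =
      tmul (n * g) (n * g) * (tmul g g)⁻¹ * (tmul (g * n * g⁻¹) (g * n * g⁻¹))⁻¹ := by
    rw [tmul_mul_self]
    group
  rw [key]
  exact mul_mem (mul_mem (tmul_self_mem_nabla _) (inv_mem (tmul_self_mem_nabla _)))
    (inv_mem (tmul_self_mem_nabla _))

lemma commute_tmul_swap (g h : G) : Commute (tmul g h) (tmul h g) := by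
  have key := Subgroup.mem_center_iff.1 (nabla_le_center (tmul_mul_tmul_swap_mem_nabla g h))
    (tmul h g)
  exact mul_right_cancel (by simpa only [mul_assoc] using key.symm)

end TensorSquare

section Functoriality

variable {G H K : Type*} [Group G] [Group H] [Group K]

lemma tmap_id : tmap (MonoidHom.id G) = MonoidHom.id (TS G) :=
  PresentedGroup.ext fun x => tmap_tmul _ x.1 x.2

lemma tmap_comp (g : H →* K) (f : G →* H) : tmap (g.comp f) = (tmap g).comp (tmap f) :=
  PresentedGroup.ext fun x => by
    change tmap _ (tmul x.1 x.2) = tmap g (tmap f (tmul x.1 x.2))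
    simp only [tmap_tmul, MonoidHom.comp_apply]

lemma tmap_surjective {f : G →* H} (hf : Function.Surjective f) : Function.Surjective (tmap f) :=
  fun t => PresentedGroup.generated_by _ (tmap f).range (fun ⟨a, b⟩ => by
    obtain ⟨a, rfl⟩ := hf a
    obtain ⟨b, rfl⟩ := hf b
    exact ⟨tmul a b, tmap_tmul f a b⟩) t

lemma map_tmap_nabla_le (f : G →* H) : (nabla G).map (tmap f) ≤ nabla H := by
  rw [Subgroup.map_le_iff_le_comap]
  refine Subgroup.normalClosure_le_normal ?_
  rintro _ ⟨x, rfl⟩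
  rw [SetLike.mem_coe, Subgroup.mem_comap, tmap_tmul]
  exact tmul_self_mem_nabla (f x)

lemma map_tmap_nabla_of_surjective {f : G →* H} (hf : Function.Surjective f) :
    (nabla G).map (tmap f) = nabla H := by
  rw [nabla, nabla, Subgroup.map_normalClosure _ _ (tmap_surjective hf)]
  congr 1
  ext t
  constructor
  · rintro ⟨_, ⟨x, rfl⟩, rfl⟩
    exact ⟨f x, tmap_tmul f x x⟩
  · rintro ⟨y, rfl⟩
    obtain ⟨x, rfl⟩ := hf y
    exact ⟨tmul x x, ⟨x, rfl⟩, tmap_tmul f x x⟩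

def tmapNabla (f : G →* H) : nabla G →* nabla H :=
  ((tmap f).domRestrict (nabla G)).codRestrict (nabla H) fun t =>
    map_tmap_nabla_le f ⟨t, t.2, rfl⟩

end Functoriality

end NATensor

lemma Subgroup.normal_of_le_center {G : Type*} [Group G] {K : Subgroup G}
    (hK : K ≤ Subgroup.center G) : K.Normal where
  conj_mem n hn g := by
    rwa [Subgroup.mem_center_iff.1 (hK hn) g, mul_inv_cancel_right]

def MonoidHom.mulEquivKerProdOfRightInverse {A B : Type*} [Group A] [Group B] (r : A →* B)
    (s : B →* A) (hrs : Function.RightInverse s r) (hs : ∀ b a, Commute (s b) a) :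
    A ≃* r.ker × B where
  toFun a := (⟨a * (s (r a))⁻¹, by simp [hrs (r a)]⟩, r a)
  invFun p := p.1 * s p.2
  left_inv a := by simp
  right_inv := fun ⟨k, b⟩ => by
    have hk : r k = 1 := k.2
    ext <;> simp [hk, hrs b]
  map_mul' a a' := by
    refine Prod.ext (Subtype.ext ?_) (map_mul r a a')
    change a * a' * (s (r (a * a')))⁻¹ = a * (s (r a))⁻¹ * (a' * (s (r a'))⁻¹)
    simp only [map_mul, mul_inv_rev, mul_assoc, mul_right_inj]
    rw [← mul_assoc]
    exact (hs (r a) _).inv_left.eq.symm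

section Semidirect

open SemidirectProduct

variable {N H : Type*} [Group N] [Group H] (φ : H →* MulAut N)

lemma K₃_le_nabla : K₃ N H φ ≤ nabla (N ⋊[φ] H) := by
  refine (Subgroup.closure_le _).2 ?_
  rintro _ (⟨g, n, rfl⟩ | ⟨n, rfl⟩)
  · exact tmul_mul_tmul_swap_mem_nabla g (inl n)
  · exact tmul_self_mem_nabla (inl n)

lemma K₃_le_ker_tmap_rightHom : K₃ N H φ ≤ (tmap (rightHom : N ⋊[φ] H →* H)).ker := by
  refine (Subgroup.closure_le _).2 ?_
  rintro _ (⟨g, n, rfl⟩ | ⟨n, rfl⟩) <;> simp [tmul_one, one_tmul]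

lemma tmap_rightHom_tmap_inr (t : TS H) :
    tmap (rightHom : N ⋊[φ] H →* H) (tmap inr t) = t := by
  rw [← MonoidHom.comp_apply, ← tmap_comp, rightHom_comp_inr, tmap_id, MonoidHom.id_apply]

lemma tmul_self_mul_inv_tmul_self_mem_K₃ (n : N) (h : H) :
    tmul (inl n * inr h) (inl n * inr h) * (tmul (inr h) (inr h))⁻¹ ∈ K₃ N H φ := by
  rw [tmul_mul_self, mul_inv_cancel_right, ← map_inv inr h, ← inl_aut,
    (commute_tmul_swap _ _).eq]
  exact mul_mem (Subgroup.subset_closure (Or.inl ⟨inr h, n, rfl⟩))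
    (Subgroup.subset_closure (Or.inr ⟨φ h n, rfl⟩))

lemma nabla_le_K₃_sup : nabla (N ⋊[φ] H) ≤ K₃ N H φ ⊔ (nabla H).map (tmap inr) := by
  have : (K₃ N H φ ⊔ (nabla H).map (tmap inr)).Normal :=
    Subgroup.normal_of_le_center <| sup_le ((K₃_le_nabla φ).trans nabla_le_center)
      ((map_tmap_nabla_le inr).trans nabla_le_center)
  refine Subgroup.normalClosure_le_normal ?_
  rintro _ ⟨x, rfl⟩
  rw [← inl_left_mul_inr_right x]
  have hinr : tmul (inr x.right) (inr x.right) ∈ (nabla H).map (tmap (inr : H →* N ⋊[φ] H)) :=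
    ⟨tmul x.right x.right, tmul_self_mem_nabla _, tmap_tmul _ _ _⟩
  simpa using Subgroup.mul_mem_sup (tmul_self_mul_inv_tmul_self_mem_K₃ φ x.left x.right) hinr

lemma nabla_inf_ker_tmap_rightHom :
    nabla (N ⋊[φ] H) ⊓ (tmap (rightHom : N ⋊[φ] H →* H)).ker = K₃ N H φ := by
  refine le_antisymm ?_ (le_inf (K₃_le_nabla φ) (K₃_le_ker_tmap_rightHom φ))
  rintro t ⟨ht, hker⟩
  have : (K₃ N H φ).Normal := Subgroup.normal_of_le_center ((K₃_le_nabla φ).trans nabla_le_center)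
  obtain ⟨k, hk, _, ⟨u, -, rfl⟩, rfl⟩ := Subgroup.mem_sup_of_normal_left.1 (nabla_le_K₃_sup φ ht)
  have hu : u = 1 := by
    simpa [MonoidHom.mem_ker.1 (K₃_le_ker_tmap_rightHom φ hk), tmap_rightHom_tmap_inr] using hker
  simpa [hu] using hk

lemma ker_tmapNabla_rightHom :
    (tmapNabla (rightHom : N ⋊[φ] H →* H)).ker = (K₃ N H φ).subgroupOf (nabla _) := by
  rw [tmapNabla, MonoidHom.ker_codRestrict, MonoidHom.ker_domRestrict, Subgroup.subgroupOf_inj,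
    inf_comm, nabla_inf_ker_tmap_rightHom, inf_of_le_left (K₃_le_nabla φ)]

def nablaSemidirectProductEquiv : nabla (N ⋊[φ] H) ≃* K₃ N H φ × nabla H :=
  ((tmapNabla rightHom).mulEquivKerProdOfRightInverse (tmapNabla inr)
      (fun t => Subtype.ext (tmap_rightHom_tmap_inr φ t.1))
      (fun u t => Subtype.ext
        (Subgroup.mem_center_iff.1 (nabla_le_center (tmapNabla inr u).2) t.1).symm)).trans
    (MulEquiv.prodCongr ((MulEquiv.subgroupCongr (ker_tmapNabla_rightHom φ)).trans
      (Subgroup.subgroupOfEquivOfLe (K₃_le_nabla φ))) (MulEquiv.refl _))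

end Semidirect

/-- for `G = N ⋊ H`, the sequence `1 → K₃ → ∇(G) → ∇(H) → 1` induced by the
projection `p : G → H` is exact, splits via the map induced by the inclusion `H → G`, and
`∇(G) ≅ K₃ × ∇(H)`. -/
theorem nabla_of_semidirect_product
    (N H : Type*) [Group N] [Group H] (φ : H →* MulAut N) :
    K₃ N H φ ≤ nabla (N ⋊[φ] H) ∧
    Subgroup.map (tmap (SemidirectProduct.rightHom : N ⋊[φ] H →* H)) (nabla (N ⋊[φ] H)) =
      nabla H ∧
    nabla (N ⋊[φ] H) ⊓
        MonoidHom.ker (tmap (SemidirectProduct.rightHom : N ⋊[φ] H →* H)) = K₃ N H φ ∧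
    Subgroup.map (tmap (SemidirectProduct.inr : H →* N ⋊[φ] H)) (nabla H) ≤
      nabla (N ⋊[φ] H) ∧
    (∀ t : TS H,
      tmap (SemidirectProduct.rightHom : N ⋊[φ] H →* H)
        (tmap (SemidirectProduct.inr : H →* N ⋊[φ] H) t) = t) ∧
    Nonempty (↥(nabla (N ⋊[φ] H)) ≃* ↥(K₃ N H φ) × ↥(nabla H)) :=
  ⟨K₃_le_nabla φ, map_tmap_nabla_of_surjective SemidirectProduct.rightHom_surjective,
    nabla_inf_ker_tmap_rightHom φ, map_tmap_nabla_le _, tmap_rightHom_tmap_inr φ,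
    ⟨nablaSemidirectProductEquiv φ⟩⟩
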